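/- arXiv:2307.12985 — 5 statements merged into one kernel-verified Lean document; each statement's English description precedes it below -/
import Mathlib

section
/- If X ~ NB(μ, b) and, conditional on X = x, (X1, X2) follows a Dirichlet-multinomial distribution with parameters (x, εb, (1-ε)b) for ε ∈ (0,1), then X1 ~ NB(εμ, εb), X2 ~ NB((1-ε)μ, (1-ε)b), and X1 and X2 are independent. -/
/-- The negative binomial pmf in the mean/overdispersion parameterization `NB(μ, b)`. -/
noncomputable def nbPMF (μ b : ℝ) (k : ℕ) : ℝ :=
  Real.Gamma (k + b) / (Real.Gamma b * (Nat.factorial k)) *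
    (μ / (μ + b)) ^ k * (b / (μ + b)) ^ b

/-- The beta function `B(a, c) = Γ(a) Γ(c) / Γ(a + c)`. -/
noncomputable def betaFn (a c : ℝ) : ℝ :=
  Real.Gamma a * Real.Gamma c / Real.Gamma (a + c)

/-- The beta-binomial pmf with `n` trials and shape parameters `a, c`, evaluated at `k`. -/
noncomputable def betaBinomPMF (n : ℕ) (a c : ℝ) (k : ℕ) : ℝ :=
  (n.choose k) * betaFn ((k : ℝ) + a) (((n - k : ℕ) : ℝ) + c) / betaFn a c

/-- Negative binomial count splitting with the correct overdispersion parameter: if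
`X ~ NB(μ, b)` and, conditional on `X = x`, `(X1, X2) ~ DirichletMultinomial(x, εb, (1-ε)b)`
(i.e. `X1 | X = x ~ BetaBinomial(x, εb, (1-ε)b)` and `X2 = x - X1`), then the joint pmf of
`(X1, X2)` factors as the product of an `NB(εμ, εb)` pmf and an `NB((1-ε)μ, (1-ε)b)` pmf;
hence `X1 ~ NB(εμ, εb)`, `X2 ~ NB((1-ε)μ, (1-ε)b)`, and `X1, X2` are independent. -/
theorem nb_count_splitting (μ b ε : ℝ) (hμ : 0 < μ) (hb : 0 < b)
    (hε : ε ∈ Set.Ioo (0 : ℝ) 1) :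
    ∀ k1 k2 : ℕ,
      nbPMF μ b (k1 + k2) * betaBinomPMF (k1 + k2) (ε * b) ((1 - ε) * b) k1 =
        nbPMF (ε * μ) (ε * b) k1 * nbPMF ((1 - ε) * μ) ((1 - ε) * b) k2 := by
  obtain ⟨hε0, hε1⟩ := hε
  intro k1 k2
  have h1ε : (0:ℝ) < 1 - ε := by linarith
  have hpb : (0:ℝ) < μ + b := by linarith
  have hq : (0:ℝ) < b / (μ + b) := div_pos hb hpb
  have hbase1 : ε * μ / (ε * μ + ε * b) = μ / (μ + b) := by
    rw [← mul_add, mul_div_mul_left _ _ (ne_of_gt hε0)]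
  have hbase1' : ε * b / (ε * μ + ε * b) = b / (μ + b) := by
    rw [← mul_add, mul_div_mul_left _ _ (ne_of_gt hε0)]
  have hbase2 : (1 - ε) * μ / ((1 - ε) * μ + (1 - ε) * b) = μ / (μ + b) := by
    rw [← mul_add, mul_div_mul_left _ _ (ne_of_gt h1ε)]
  have hbase2' : (1 - ε) * b / ((1 - ε) * μ + (1 - ε) * b) = b / (μ + b) := by
    rw [← mul_add, mul_div_mul_left _ _ (ne_of_gt h1ε)]
  have hsub : (k1 + k2 - k1 : ℕ) = k2 := by omega
  have hrpow : (b / (μ + b)) ^ b = (b / (μ + b)) ^ (ε * b) * (b / (μ + b)) ^ ((1 - ε) * b) := by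
    rw [← Real.rpow_add hq]
    congr 1
    ring
  unfold nbPMF betaBinomPMF betaFn
  rw [hsub, hbase1, hbase1', hbase2, hbase2', hrpow,
    Nat.cast_choose ℝ (Nat.le_add_right k1 k2), hsub]
  have hG1 : Real.Gamma (ε * b) ≠ 0 := ne_of_gt (Real.Gamma_pos_of_pos (by positivity))
  have hG2 : Real.Gamma ((1 - ε) * b) ≠ 0 := ne_of_gt (Real.Gamma_pos_of_pos (by positivity))
  have hG3 : Real.Gamma b ≠ 0 := ne_of_gt (Real.Gamma_pos_of_pos hb)
  have hG4 : Real.Gamma ((↑(k1 + k2) : ℝ) + b) ≠ 0 :=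
    ne_of_gt (Real.Gamma_pos_of_pos (by positivity))
  have hG5 : Real.Gamma (ε * b + (1 - ε) * b) ≠ 0 := by
    have : ε * b + (1 - ε) * b = b := by ring
    rw [this]; exact hG3
  have hG6 : Real.Gamma ((↑k1 : ℝ) + ε * b + ((↑k2 : ℝ) + (1 - ε) * b)) =
      Real.Gamma ((↑(k1 + k2) : ℝ) + b) := by
    congr 1
    push_cast
    ring
  rw [hG6]
  have hf1 : ((Nat.factorial k1 : ℝ)) ≠ 0 := by positivity
  have hf2 : ((Nat.factorial k2 : ℝ)) ≠ 0 := by positivity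
  have hf3 : ((Nat.factorial (k1 + k2) : ℝ)) ≠ 0 := by positivity
  push_cast
  field_simp
  ring_nf
end

section
/- If X ~ NB(μ, b) and, conditional on X = x, (X1, ..., XM) follows a Dirichlet-multinomial distribution with parameters (x, ε1 b, ..., εM b) where εm ∈ (0,1) sum to 1, then the folds X1, ..., XM are mutually independent with Xm ~ NB(εm μ, εm b). -/
/-- The Dirichlet-multinomial pmf with `x` trials and concentration parameters `α`,
evaluated at counts `f`. -/
noncomputable def dmPMF {M : ℕ} (x : ℕ) (α : Fin M → ℝ) (f : Fin M → ℕ) : ℝ :=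
  if ∑ m, f m = x then
    (Nat.factorial x : ℝ) * Real.Gamma (∑ m, α m) / Real.Gamma ((x : ℝ) + ∑ m, α m) *
      ∏ m, (Real.Gamma ((f m : ℝ) + α m) / ((Nat.factorial (f m) : ℝ) * Real.Gamma (α m)))
  else 0

/-- Negative binomial count splitting into `M` folds: if `X ~ NB(μ, b)` and, conditional on
`X = x`, `(X1, ..., XM) ~ DirichletMultinomial(x, ε1 b, ..., εM b)` with `εm ∈ (0,1)`
summing to 1, then the joint pmf of the folds factors as a product of `NB(εm μ, εm b)`
pmfs; hence the folds are mutually independent with `Xm ~ NB(εm μ, εm b)`. -/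
theorem nb_count_splitting_multifold (μ b : ℝ) (hμ : 0 < μ) (hb : 0 < b)
    (M : ℕ) (hM : 0 < M) (ε : Fin M → ℝ) (hε : ∀ m, ε m ∈ Set.Ioo (0 : ℝ) 1)
    (hsum : ∑ m, ε m = 1) :
    ∀ f : Fin M → ℕ,
      nbPMF μ b (∑ m, f m) * dmPMF (∑ m, f m) (fun m => ε m * b) f =
        ∏ m, nbPMF (ε m * μ) (ε m * b) (f m) := by
  intro f
  have hαsum : ∑ m, ε m * b = b := by rw [← Finset.sum_mul, hsum, one_mul]
  set x : ℕ := ∑ m, f m with hx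
  have hμb : (0 : ℝ) < μ + b := by linarith
  -- Rewrite each RHS factor
  have hterm : ∀ m, nbPMF (ε m * μ) (ε m * b) (f m) =
      Real.Gamma ((f m : ℝ) + ε m * b) / (Real.Gamma (ε m * b) * (Nat.factorial (f m))) *
        (μ / (μ + b)) ^ (f m) * (b / (μ + b)) ^ (ε m * b) := by
    intro m
    have hεm := (hε m).1
    have h1 : ε m * μ + ε m * b = ε m * (μ + b) := by ring
    unfold nbPMF
    rw [h1, mul_div_mul_left μ (μ + b) (ne_of_gt hεm),
      mul_div_mul_left b (μ + b) (ne_of_gt hεm)]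
  rw [Finset.prod_congr rfl fun m _ => hterm m]
  rw [Finset.prod_mul_distrib, Finset.prod_mul_distrib]
  have hpow1 : ∏ m, (μ / (μ + b)) ^ (f m) = (μ / (μ + b)) ^ x := by
    rw [Finset.prod_pow_eq_pow_sum]
  have hpow2 : ∏ m, (b / (μ + b)) ^ (ε m * b) = (b / (μ + b)) ^ (b : ℝ) := by
    rw [← Real.rpow_sum_of_pos (by positivity) (fun m => ε m * b) Finset.univ, hαsum]
  rw [hpow1, hpow2]
  unfold nbPMF dmPMF
  rw [if_pos rfl, hαsum]
  have hΓb : Real.Gamma b ≠ 0 := ne_of_gt (Real.Gamma_pos_of_pos hb)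
  have hΓxb : Real.Gamma ((x : ℝ) + b) ≠ 0 := by
    refine ne_of_gt (Real.Gamma_pos_of_pos ?_)
    positivity
  have hfact : (Nat.factorial x : ℝ) ≠ 0 := by positivity
  have hprodeq : ∏ m, Real.Gamma ((f m : ℝ) + ε m * b) /
      ((Nat.factorial (f m) : ℝ) * Real.Gamma (ε m * b)) =
      ∏ m, Real.Gamma ((f m : ℝ) + ε m * b) /
      (Real.Gamma (ε m * b) * (Nat.factorial (f m) : ℝ)) := by
    refine Finset.prod_congr rfl fun m _ => ?_
    ring
  rw [hprodeq]
  have h1 : Real.Gamma ((x : ℝ) + b) / (Real.Gamma b * (Nat.factorial x : ℝ)) *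
      ((Nat.factorial x : ℝ) * Real.Gamma b / Real.Gamma ((x : ℝ) + b)) = 1 := by
    field_simp
  calc Real.Gamma ((x : ℝ) + b) / (Real.Gamma b * (Nat.factorial x : ℝ)) * (μ / (μ + b)) ^ x *
        (b / (μ + b)) ^ (b : ℝ) *
        ((Nat.factorial x : ℝ) * Real.Gamma b / Real.Gamma ((x : ℝ) + b) *
          ∏ m, Real.Gamma ((f m : ℝ) + ε m * b) /
            (Real.Gamma (ε m * b) * (Nat.factorial (f m) : ℝ)))
      = (Real.Gamma ((x : ℝ) + b) / (Real.Gamma b * (Nat.factorial x : ℝ)) *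
          ((Nat.factorial x : ℝ) * Real.Gamma b / Real.Gamma ((x : ℝ) + b))) *
        ((∏ m, Real.Gamma ((f m : ℝ) + ε m * b) /
            (Real.Gamma (ε m * b) * (Nat.factorial (f m) : ℝ))) *
          (μ / (μ + b)) ^ x * (b / (μ + b)) ^ (b : ℝ)) := by ring
    _ = (∏ m, Real.Gamma ((f m : ℝ) + ε m * b) /
            (Real.Gamma (ε m * b) * (Nat.factorial (f m) : ℝ))) *
          (μ / (μ + b)) ^ x * (b / (μ + b)) ^ (b : ℝ) := by rw [h1, one_mul]
end

section
/- If X ~ NB(μ, b) and X1 | X = x ~ Binomial(x, ε) with ε ∈ (0,1), then X1 ~ NB(εμ, b) marginally. -/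
/-- The binomial pmf with `n` trials and success probability `p`, evaluated at `k`. -/
noncomputable def binomPMF (n : ℕ) (p : ℝ) (k : ℕ) : ℝ :=
  (n.choose k) * p ^ k * (1 - p) ^ (n - k)

open Polynomial

theorem Real.Gamma_add_nat_eq_mul_ascPochhammer {a : ℝ} (ha : ∀ k : ℕ, a + k ≠ 0) (n : ℕ) :
    Real.Gamma (a + n) = Real.Gamma a * (ascPochhammer ℝ n).eval a := by
  induction n with
  | zero => simp
  | succ n ih =>
    rw [Nat.cast_succ, ← add_assoc, Real.Gamma_add_one (ha n), ih, ascPochhammer_succ_eval]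
    ring

theorem Ring.choose_add_nat_sub_one {K : Type*} [Field K] [CharZero K] (a : K) (n : ℕ) :
    Ring.choose (a + n - 1) n = (ascPochhammer K n).eval a / n.factorial := by
  rw [Ring.choose_eq_smul, descPochhammer_smeval_eq_ascPochhammer, ascPochhammer_smeval_eq_eval,
    smul_eq_mul, inv_mul_eq_div]
  congr 2
  ring

theorem Real.hasSum_Gamma_add_div_factorial_mul_pow {a t : ℝ} (ha : ∀ k : ℕ, a + k ≠ 0)
    (ht : |t| < 1) :
    HasSum (fun n : ℕ ↦ Real.Gamma (n + a) / n.factorial * t ^ n)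
      (Real.Gamma a / (1 - t) ^ a) := by
  have hball : t ∈ Metric.eball (0 : ℝ) 1 := by
    simpa [Metric.mem_eball, edist_dist, Real.dist_eq] using ht
  have hseries := (Real.one_div_one_sub_rpow_hasFPowerSeriesOnBall_zero a).hasSum hball
  simp only [FormalMultilinearSeries.ofScalars_apply_eq, zero_add, smul_eq_mul] at hseries
  have hcoeff (n : ℕ) :
      Real.Gamma (n + a) / n.factorial = Real.Gamma a * Ring.choose (a + n - 1) n := by
    rw [add_comm (n : ℝ), Real.Gamma_add_nat_eq_mul_ascPochhammer ha, Ring.choose_add_nat_sub_one,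
      mul_div_assoc]
  simp_rw [hcoeff, mul_assoc, div_eq_mul_one_div (Real.Gamma a)]
  exact hseries.mul_left _

theorem binomPMF_eq_zero_of_lt {n k : ℕ} (h : n < k) (p : ℝ) : binomPMF n p k = 0 := by
  simp [binomPMF, Nat.choose_eq_zero_of_lt h]

theorem nbPMF_add_mul_binomPMF (μ b ε : ℝ) (j k : ℕ) :
    nbPMF μ b (j + k) * binomPMF (j + k) ε k =
      (ε * μ / (μ + b)) ^ k * (b / (μ + b)) ^ b / (Real.Gamma b * k.factorial) *
        (Real.Gamma (j + (k + b)) / j.factorial * ((1 - ε) * μ / (μ + b)) ^ j) := by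
  rw [nbPMF, binomPMF, Nat.cast_choose ℝ (Nat.le_add_left k j), Nat.add_sub_cancel, Nat.cast_add,
    add_assoc, mul_div_assoc ε, mul_div_assoc (1 - ε)]
  simp only [mul_pow]
  have := Nat.factorial_ne_zero j
  have := Nat.factorial_ne_zero k
  field_simp
  ring

theorem nbPMF_eq_mul_div_rpow {m b c : ℝ} (hb : 0 ≤ b) (hmb : 0 < m + b) (hc : 0 < c) (k : ℕ) :
    nbPMF m b k = Real.Gamma (k + b) / (Real.Gamma b * k.factorial) *
      (m / c) ^ k * (b / c) ^ b / ((m + b) / c) ^ ((k : ℝ) + b) := by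
  have hmbc : 0 < (m + b) / c := by positivity
  have hm : (m / c) ^ k / ((m + b) / c) ^ k = (m / (m + b)) ^ k := by
    rw [← div_pow, div_div_div_cancel_right₀ hc.ne']
  have hb' : (b / c) ^ b / ((m + b) / c) ^ b = (b / (m + b)) ^ b := by
    rw [← Real.div_rpow (by positivity) hmbc.le, div_div_div_cancel_right₀ hc.ne']
  rw [nbPMF, ← hm, ← hb', Real.rpow_add hmbc, Real.rpow_natCast]
  ring

/-- Binomial thinning of the negative binomial: if `X ~ NB(μ, b)` and
`X1 | X = x ~ Binomial(x, ε)` with `ε ∈ (0,1)`, then marginally `X1 ~ NB(εμ, b)`. -/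
theorem binomial_thinning_nb (μ b ε : ℝ) (hμ : 0 < μ) (hb : 0 < b)
    (hε : ε ∈ Set.Ioo (0 : ℝ) 1) (k : ℕ) :
    (∑' x : ℕ, nbPMF μ b x * binomPMF x ε k) = nbPMF (ε * μ) b k := by
  obtain ⟨hε0, hε1⟩ := hε
  have hμb : 0 < μ + b := by positivity
  set s := (1 - ε) * μ / (μ + b) with hs_def
  have hs : |s| < 1 := by
    rw [abs_lt, hs_def, lt_div_iff₀ hμb, div_lt_one hμb]
    constructor <;> nlinarith
  have h1s : 1 - s = (ε * μ + b) / (μ + b) := by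
    rw [hs_def]
    field_simp
    ring
  have hthin : HasSum (fun x ↦ nbPMF μ b x * binomPMF x ε k)
      ((ε * μ / (μ + b)) ^ k * (b / (μ + b)) ^ b / (Real.Gamma b * k.factorial) *
        (Real.Gamma (k + b) / (1 - s) ^ ((k : ℝ) + b))) := by
    rw [← hasSum_nat_add_iff' k, Finset.sum_eq_zero fun x hx ↦ by
      rw [binomPMF_eq_zero_of_lt (Finset.mem_range.mp hx), mul_zero], sub_zero]
    simpa only [nbPMF_add_mul_binomPMF] using
      (Real.hasSum_Gamma_add_div_factorial_mul_pow (fun n ↦ by positivity) hs).mul_left _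
  rw [hthin.tsum_eq, nbPMF_eq_mul_div_rpow hb.le (by positivity) hμb, ← h1s]
  ring
end

section
/- If X ~ NB(μ, b), X1 | X = x ~ Binomial(x, ε) with ε ∈ (0,1), and X2 = X - X1, then Cov(X1, X2) = ε(1-ε) μ²/b > 0; consequently Cor(X1, X2) = sqrt(ε(1-ε)) / sqrt(b²/μ² + b/μ + ε(1-ε)). -/
/-!
Given `N = X₁ + X₂ = n`, `X₁ ~ Bin(n, ε)`, so every moment of order at most two of `(X₁, X₂)`
is a combination of the factorial moments `E[N] = μ` and `E[N(N-1)] = (b+1)μ²/b`. These come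
from the size-biasing identity `(n+1) NB(μ, b)(n+1) = μ · NB(μ(b+1)/b, b+1)(n)` together with
the normalisation of the negative binomial, which is the binomial series of `(1-p)^(-b)`.
In particular `E[X₁X₂] = ε(1-ε) E[N(N-1)]` exceeds `E[X₁] E[X₂] = ε(1-ε)μ²` by `ε(1-ε)μ²/b`.
Swapping the two folds replaces `ε` by `1 - ε`, so the moments of `X₂` are read off from those
of `X₁`.
-/

open Finset Real

theorem Real.Gamma_add_nat_div_Gamma_eq {b : ℝ} (hb : ∀ k : ℕ, b ≠ -k) (n : ℕ) :
    Gamma (b + n) / Gamma b = (ascPochhammer ℝ n).eval b := by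
  induction n with
  | zero => simp [Gamma_ne_zero hb]
  | succ n ih =>
    have hbn : b + n ≠ 0 := fun h => hb n (eq_neg_of_add_eq_zero_left h)
    rw [ascPochhammer_succ_eval, ← ih, Nat.cast_succ, ← add_assoc, Gamma_add_one hbn]
    ring

theorem Real.Gamma_natCast_add_div_eq_multichoose {b : ℝ} (hb : ∀ k : ℕ, b ≠ -k) (n : ℕ) :
    Gamma (n + b) / (Gamma b * n.factorial) = Ring.multichoose b n := by
  have h := Ring.factorial_nsmul_multichoose_eq_ascPochhammer b n
  rw [Polynomial.ascPochhammer_smeval_eq_eval, ← Gamma_add_nat_div_Gamma_eq hb, nsmul_eq_mul] at h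
  rw [add_comm, div_mul_eq_div_div, ← h]
  field_simp

lemma hasSum_multichoose_mul_pow (b : ℝ) {x : ℝ} (hx : |x| < 1) :
    HasSum (fun n => Ring.multichoose b n * x ^ n) ((1 - x) ^ (-b)) := by
  have h := (one_div_one_sub_rpow_hasFPowerSeriesOnBall_zero b).hasSum
    (y := x) (by simpa [Metric.mem_eball, edist_dist] using hx)
  simp only [FormalMultilinearSeries.ofScalars_apply_eq, smul_eq_mul, zero_add] at h
  simpa [Ring.multichoose_eq, rpow_neg (show 0 ≤ 1 - x by linarith [le_abs_self x])] using h

section NegativeBinomial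

variable {μ b : ℝ}

lemma nbPMF_nonneg (hμ : 0 ≤ μ) (hb : 0 < b) (n : ℕ) : 0 ≤ nbPMF μ b n := by
  have := (Gamma_pos_of_pos (show 0 < n + b by positivity)).le
  have := (Gamma_pos_of_pos hb).le
  unfold nbPMF
  positivity

lemma hasSum_nbPMF (hμ : 0 < μ) (hb : 0 < b) : HasSum (nbPMF μ b) 1 := by
  have hp : |μ / (μ + b)| < 1 := by
    rw [abs_of_pos (by positivity), div_lt_one (by positivity)]
    linarith
  have hq : 1 - μ / (μ + b) = b / (μ + b) := by field_simp; ring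
  have h := (hasSum_multichoose_mul_pow b hp).mul_right ((b / (μ + b)) ^ b)
  have hb' (k : ℕ) : b ≠ -k := by
    have := k.cast_nonneg (α := ℝ)
    linarith
  rwa [hq, ← rpow_add (by positivity), neg_add_cancel, rpow_zero,
    ← funext fun n => Gamma_natCast_add_div_eq_multichoose hb' n] at h

lemma succ_mul_nbPMF_succ (hμ : 0 < μ) (hb : 0 < b) (n : ℕ) :
    ((n : ℝ) + 1) * nbPMF μ b (n + 1) = μ * nbPMF (μ * (b + 1) / b) (b + 1) n := by
  have hμb : 0 < μ + b := by positivity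
  have hp : μ * (b + 1) / b / (μ * (b + 1) / b + (b + 1)) = μ / (μ + b) := by
    field_simp
  have hq : (b + 1) / (μ * (b + 1) / b + (b + 1)) = b / (μ + b) := by
    field_simp
  have hΓ : Gamma b ≠ 0 := (Gamma_pos_of_pos hb).ne'
  unfold nbPMF
  rw [hp, hq, Nat.cast_succ, show (n : ℝ) + 1 + b = n + b + 1 by ring,
    show (n : ℝ) + (b + 1) = n + b + 1 by ring, Gamma_add_one hb.ne',
    rpow_add_one (by positivity), Nat.factorial_succ, pow_succ]
  push_cast
  field_simp

lemma hasSum_mul_nbPMF (hμ : 0 < μ) (hb : 0 < b) :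
    HasSum (fun n : ℕ => n * nbPMF μ b n) μ := by
  rw [← hasSum_nat_add_iff' 1]
  have h := (hasSum_nbPMF (μ := μ * (b + 1) / b) (b := b + 1) (by positivity)
    (by positivity)).mul_left μ
  simpa [succ_mul_nbPMF_succ hμ hb] using h

lemma hasSum_mul_sub_one_mul_nbPMF (hμ : 0 < μ) (hb : 0 < b) :
    HasSum (fun n : ℕ => n * (n - 1) * nbPMF μ b n) ((b + 1) / b * μ ^ 2) := by
  have h := (hasSum_mul_nbPMF (μ := μ * (b + 1) / b) (b := b + 1) (by positivity)
    (by positivity)).mul_left μ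
  have e : (fun n : ℕ => μ * (n * nbPMF (μ * (b + 1) / b) (b + 1) n)) =
      fun n : ℕ => ((n + 1 : ℕ) : ℝ) * ((n + 1 : ℕ) - 1) * nbPMF μ b (n + 1) := by
    ext n
    push_cast
    linear_combination (-n : ℝ) * succ_mul_nbPMF_succ hμ hb n
  rw [e, show μ * (μ * (b + 1) / b) = (b + 1) / b * μ ^ 2 by ring] at h
  rw [← hasSum_nat_add_iff' 1]
  simpa using h

end NegativeBinomial

lemma binomPMF_nonneg {ε : ℝ} (hε₀ : 0 ≤ ε) (hε₁ : ε ≤ 1) (n k : ℕ) : 0 ≤ binomPMF n ε k := by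
  have : 0 ≤ 1 - ε := by linarith
  unfold binomPMF
  positivity

section Binomial

variable (ε : ℝ) (n : ℕ)

lemma binomPMF_add_swap (k l : ℕ) : binomPMF (k + l) ε k = binomPMF (l + k) (1 - ε) l := by
  rw [binomPMF, binomPMF, Nat.add_sub_cancel_left, add_comm l k, Nat.add_sub_cancel,
    sub_sub_cancel, Nat.choose_symm_add]
  ring

lemma sum_range_binomPMF : ∑ k ∈ range (n + 1), binomPMF n ε k = 1 := by
  have h := add_pow ε (1 - ε) n
  rw [add_sub_cancel, one_pow] at h
  rw [h]
  exact sum_congr rfl fun k _ => by rw [binomPMF]; ring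

lemma succ_mul_binomPMF_succ (k : ℕ) :
    ((k : ℝ) + 1) * binomPMF (n + 1) ε (k + 1) = ((n : ℝ) + 1) * ε * binomPMF n ε k := by
  have h : ((n + 1).choose (k + 1) : ℝ) * (k + 1) = (n + 1) * n.choose k := by
    exact_mod_cast (Nat.add_one_mul_choose_eq n k).symm
  rw [binomPMF, binomPMF, Nat.succ_sub_succ, pow_succ]
  linear_combination ε ^ k * ε * (1 - ε) ^ (n - k) * h

lemma sum_range_mul_binomPMF : ∑ k ∈ range (n + 1), k * binomPMF n ε k = n * ε := by
  cases n with
  | zero => simp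
  | succ n =>
    rw [sum_range_succ']
    simp only [Nat.cast_succ, succ_mul_binomPMF_succ, ← mul_sum, sum_range_binomPMF]
    simp

lemma sum_range_mul_sub_one_mul_binomPMF :
    ∑ k ∈ range (n + 1), k * (k - 1) * binomPMF n ε k = n * (n - 1) * ε ^ 2 := by
  cases n with
  | zero => simp
  | succ n =>
    rw [sum_range_succ']
    have e (k : ℕ) : ((k + 1 : ℕ) : ℝ) * ((k + 1 : ℕ) - 1) * binomPMF (n + 1) ε (k + 1) =
        ((n : ℝ) + 1) * ε * (k * binomPMF n ε k) := by
      push_cast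
      linear_combination (k : ℝ) * succ_mul_binomPMF_succ ε n k
    simp only [e, ← mul_sum, sum_range_mul_binomPMF]
    push_cast
    ring

lemma sum_antidiagonal_binomPMF_mul (a c : ℝ) :
    ∑ q ∈ antidiagonal n, binomPMF n ε q.1 * (a * q.1 + c * (q.1 * (q.1 - 1))) =
      a * ε * n + c * ε ^ 2 * (n * (n - 1)) := calc
  _ = a * ∑ k ∈ range (n + 1), k * binomPMF n ε k +
      c * ∑ k ∈ range (n + 1), k * (k - 1) * binomPMF n ε k := by
    rw [Nat.sum_antidiagonal_eq_sum_range_succ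
      (fun k _ => binomPMF n ε k * (a * k + c * (k * (k - 1)))), mul_sum, mul_sum, ← sum_add_distrib]
    exact sum_congr rfl fun k _ => by ring
  _ = _ := by
    rw [sum_range_mul_binomPMF, sum_range_mul_sub_one_mul_binomPMF]
    ring

end Binomial

lemma hasSum_of_hasSum_sum_antidiagonal_of_nonneg {f : ℕ × ℕ → ℝ} (hf : ∀ q, 0 ≤ f q) {a : ℝ}
    (h : HasSum (fun n => ∑ q ∈ antidiagonal n, f q) a) : HasSum f a := by
  let e := HasAntidiagonal.sigmaAntidiagonalEquivProd (A := ℕ)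
  have hfiber (n : ℕ) :
      HasSum (fun q : antidiagonal n => f (e ⟨n, q⟩)) (∑ q ∈ antidiagonal n, f q) :=
    (antidiagonal n).hasSum f
  have hsum : Summable (f ∘ e) :=
    (summable_sigma_of_nonneg fun _ => hf _).mpr
      ⟨fun n => (hfiber n).summable, by simpa only [(hfiber _).tsum_eq] using h.summable⟩
  rw [← e.hasSum_iff]
  exact (hsum.hasSum.sigma hfiber).unique h ▸ hsum.hasSum

noncomputable def thinnedNBPMF (μ b ε : ℝ) (k l : ℕ) : ℝ := nbPMF μ b (k + l) * binomPMF (k + l) ε k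

section Thinning

variable {μ b ε : ℝ}

lemma thinnedNBPMF_swap (k l : ℕ) : thinnedNBPMF μ b ε k l = thinnedNBPMF μ b (1 - ε) l k := by
  rw [thinnedNBPMF, thinnedNBPMF, binomPMF_add_swap, add_comm]

lemma tsum_thinnedNBPMF_mul_swap (g : ℕ → ℕ → ℝ) :
    ∑' q : ℕ × ℕ, thinnedNBPMF μ b ε q.1 q.2 * g q.2 q.1 =
      ∑' q : ℕ × ℕ, thinnedNBPMF μ b (1 - ε) q.1 q.2 * g q.1 q.2 := by
  rw [← (Equiv.prodComm ℕ ℕ).tsum_eq]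
  simp [thinnedNBPMF_swap (ε := ε)]

variable (hμ : 0 < μ) (hb : 0 < b) (hε₀ : 0 ≤ ε) (hε₁ : ε ≤ 1)
include hμ hb hε₀ hε₁

lemma hasSum_thinnedNBPMF_mul {g : ℕ → ℕ → ℝ} (hg : ∀ k l, 0 ≤ g k l) (c₁ c₂ : ℝ)
    (hrow : ∀ n, ∑ q ∈ antidiagonal n, binomPMF n ε q.1 * g q.1 q.2 = c₁ * n + c₂ * (n * (n - 1))) :
    HasSum (fun q : ℕ × ℕ => thinnedNBPMF μ b ε q.1 q.2 * g q.1 q.2)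
      (c₁ * μ + c₂ * ((b + 1) / b * μ ^ 2)) := by
  have hrow' (n : ℕ) : ∑ q ∈ antidiagonal n, thinnedNBPMF μ b ε q.1 q.2 * g q.1 q.2 =
      c₁ * (n * nbPMF μ b n) + c₂ * (n * (n - 1) * nbPMF μ b n) := calc
    _ = nbPMF μ b n * ∑ q ∈ antidiagonal n, binomPMF n ε q.1 * g q.1 q.2 := by
      rw [mul_sum]
      refine sum_congr rfl fun q hq => ?_
      rw [thinnedNBPMF, mem_antidiagonal.mp hq, mul_assoc]
    _ = _ := by
      rw [hrow]
      ring
  have hsum : HasSum (fun n => ∑ q ∈ antidiagonal n, thinnedNBPMF μ b ε q.1 q.2 * g q.1 q.2)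
      (c₁ * μ + c₂ * ((b + 1) / b * μ ^ 2)) := by
    simpa only [hrow'] using
      ((hasSum_mul_nbPMF hμ hb).mul_left c₁).add ((hasSum_mul_sub_one_mul_nbPMF hμ hb).mul_left c₂)
  refine hasSum_of_hasSum_sum_antidiagonal_of_nonneg (fun q => ?_) hsum
  exact mul_nonneg (mul_nonneg (nbPMF_nonneg hμ.le hb _) (binomPMF_nonneg hε₀ hε₁ _ _)) (hg _ _)

lemma hasSum_thinnedNBPMF_mul_fst :
    HasSum (fun q : ℕ × ℕ => thinnedNBPMF μ b ε q.1 q.2 * q.1) (ε * μ) := by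
  simpa using hasSum_thinnedNBPMF_mul hμ hb hε₀ hε₁ (g := fun k _ => k) (fun _ _ => by positivity)
    ε 0 fun n => by simpa using sum_antidiagonal_binomPMF_mul ε n 1 0

lemma hasSum_thinnedNBPMF_mul_fst_sq :
    HasSum (fun q : ℕ × ℕ => thinnedNBPMF μ b ε q.1 q.2 * q.1 ^ 2)
      (ε * μ + ε ^ 2 * ((b + 1) / b * μ ^ 2)) :=
  hasSum_thinnedNBPMF_mul hμ hb hε₀ hε₁ (g := fun k _ => (k : ℝ) ^ 2) (fun _ _ => by positivity)
    ε (ε ^ 2) fun n => (sum_congr rfl fun q _ => by ring).trans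
      ((sum_antidiagonal_binomPMF_mul ε n 1 1).trans (by ring))

lemma hasSum_thinnedNBPMF_mul_fst_mul_snd :
    HasSum (fun q : ℕ × ℕ => thinnedNBPMF μ b ε q.1 q.2 * (q.1 * q.2))
      (ε * (1 - ε) * ((b + 1) / b * μ ^ 2)) := by
  simpa using hasSum_thinnedNBPMF_mul hμ hb hε₀ hε₁ (g := fun k l => (k : ℝ) * l)
    (fun _ _ => by positivity) 0 (ε * (1 - ε)) fun n => by
      refine (sum_congr rfl fun q hq => ?_).trans
        ((sum_antidiagonal_binomPMF_mul ε n (n - 1) (-1)).trans (by ring))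
      have hn : (q.1 : ℝ) + q.2 = n := by exact_mod_cast mem_antidiagonal.mp hq
      linear_combination (binomPMF n ε q.1 * q.1) * hn

end Thinning

lemma thinnedNB_correlation_eq {μ b ε : ℝ} (hμ : 0 < μ) (hb : 0 < b) (hε₀ : 0 < ε) (hε₁ : ε < 1) :
    ε * (1 - ε) * μ ^ 2 / b /
        (√(ε * μ * (b + ε * μ) / b) * √((1 - ε) * μ * (b + (1 - ε) * μ) / b)) =
      √(ε * (1 - ε)) / √(b ^ 2 / μ ^ 2 + b / μ + ε * (1 - ε)) := by
  have hε₁' : 0 < 1 - ε := sub_pos.mpr hε₁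
  rw [← sqrt_mul (by positivity), ← sqrt_div' _ (by positivity),
    ← sqrt_sq (by positivity : 0 ≤ ε * (1 - ε) * μ ^ 2 / b), ← sqrt_div' _ (by positivity)]
  congr 1
  field_simp
  ring

/-- Binomial thinning of negative binomial data yields positively correlated folds:
if `X ~ NB(μ, b)`, `X1 | X = x ~ Binomial(x, ε)` with `ε ∈ (0,1)`, and `X2 = X - X1`,
then `Cov(X1, X2) = ε(1-ε) μ²/b > 0` and consequently
`Cor(X1, X2) = sqrt(ε(1-ε)) / sqrt(b²/μ² + b/μ + ε(1-ε))`.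
Here the joint pmf of `(X1, X2)` is `j k1 k2 = nbPMF μ b (k1+k2) * binomPMF (k1+k2) ε k1`. -/
theorem binomial_thinning_nb_correlation (μ b ε : ℝ) (hμ : 0 < μ) (hb : 0 < b)
    (hε : ε ∈ Set.Ioo (0 : ℝ) 1) :
    let j : ℕ → ℕ → ℝ := fun k1 k2 => nbPMF μ b (k1 + k2) * binomPMF (k1 + k2) ε k1
    let E : (ℕ → ℕ → ℝ) → ℝ := fun g => ∑' q : ℕ × ℕ, j q.1 q.2 * g q.1 q.2
    let cov : ℝ :=
      E (fun k1 k2 => (k1 : ℝ) * (k2 : ℝ)) -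
        E (fun k1 _ => (k1 : ℝ)) * E (fun _ k2 => (k2 : ℝ))
    let var1 : ℝ := E (fun k1 _ => (k1 : ℝ) ^ 2) - (E (fun k1 _ => (k1 : ℝ))) ^ 2
    let var2 : ℝ := E (fun _ k2 => (k2 : ℝ) ^ 2) - (E (fun _ k2 => (k2 : ℝ))) ^ 2
    cov = ε * (1 - ε) * μ ^ 2 / b ∧ 0 < cov ∧
      cov / (Real.sqrt var1 * Real.sqrt var2) =
        Real.sqrt (ε * (1 - ε)) /
          Real.sqrt (b ^ 2 / μ ^ 2 + b / μ + ε * (1 - ε)) := by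
  obtain ⟨hε₀, hε₁⟩ := hε
  have hε₀' : 0 ≤ 1 - ε := by linarith
  have hε₁' : 1 - ε ≤ 1 := by linarith
  intro j E cov var1 var2
  have hE₁ : E (fun k _ => (k : ℝ)) = ε * μ :=
    (hasSum_thinnedNBPMF_mul_fst hμ hb hε₀.le hε₁.le).tsum_eq
  have hE₂ : E (fun _ l => (l : ℝ)) = (1 - ε) * μ :=
    (tsum_thinnedNBPMF_mul_swap fun k _ => (k : ℝ)).trans
      (hasSum_thinnedNBPMF_mul_fst hμ hb hε₀' hε₁').tsum_eq
  have hE₁₁ : E (fun k _ => (k : ℝ) ^ 2) = ε * μ + ε ^ 2 * ((b + 1) / b * μ ^ 2) :=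
    (hasSum_thinnedNBPMF_mul_fst_sq hμ hb hε₀.le hε₁.le).tsum_eq
  have hE₂₂ : E (fun _ l => (l : ℝ) ^ 2) = (1 - ε) * μ + (1 - ε) ^ 2 * ((b + 1) / b * μ ^ 2) :=
    (tsum_thinnedNBPMF_mul_swap fun k _ => (k : ℝ) ^ 2).trans
      (hasSum_thinnedNBPMF_mul_fst_sq hμ hb hε₀' hε₁').tsum_eq
  have hE₁₂ : E (fun k l => (k : ℝ) * l) = ε * (1 - ε) * ((b + 1) / b * μ ^ 2) :=
    (hasSum_thinnedNBPMF_mul_fst_mul_snd hμ hb hε₀.le hε₁.le).tsum_eq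
  have hcov : cov = ε * (1 - ε) * μ ^ 2 / b := by
    simp only [cov, hE₁, hE₂, hE₁₂]
    field_simp
    ring
  have hvar₁ : var1 = ε * μ * (b + ε * μ) / b := by
    simp only [var1, hE₁, hE₁₁]
    field_simp
    ring
  have hvar₂ : var2 = (1 - ε) * μ * (b + (1 - ε) * μ) / b := by
    simp only [var2, hE₂, hE₂₂]
    field_simp
    ring
  refine ⟨hcov, hcov ▸ by positivity, ?_⟩
  rw [hcov, hvar₁, hvar₂]
  exact thinnedNB_correlation_eq hμ hb hε₀ hε₁
end

section
/- If X ~ NB(μ, b) and conditional on X = x, X1 ~ BetaBinomial(x, εb', (1-ε)b'), then as b' → ∞ the conditional distribution of X1 given X = x converges to Binomial(x, ε); consequently the covariance Cov(X1, X − X1) = ε(1-ε)(μ²/b)(1 − (b+1)/(b'+1)) converges to ε(1-ε)μ²/b as b' → ∞. -/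
open Filter

lemma gamma_add_nat' (x : ℝ) (hx : 0 < x) (n : ℕ) :
    Real.Gamma (x + n) = Real.Gamma x * ∏ j ∈ Finset.range n, (x + j) := by
  induction n with
  | zero => simp
  | succ n ih =>
    have h : x + ((n + 1 : ℕ) : ℝ) = (x + n) + 1 := by push_cast; ring
    have hpos : x + (n : ℝ) ≠ 0 := by positivity
    rw [h, Real.Gamma_add_one hpos, ih, Finset.prod_range_succ]; ring

lemma beta_ratio (a c : ℝ) (ha : 0 < a) (hc : 0 < c) (n k : ℕ) (hk : k ≤ n) :
    betaFn ((k : ℝ) + a) (((n - k : ℕ) : ℝ) + c) / betaFn a c =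
      ((∏ j ∈ Finset.range k, (a + j)) * ∏ j ∈ Finset.range (n - k), (c + j)) /
        ∏ j ∈ Finset.range n, (a + c + j) := by
  unfold betaFn
  have h1 : (k : ℝ) + a = a + k := by ring
  have h2 : ((n - k : ℕ) : ℝ) + c = c + (n - k : ℕ) := by ring
  have h3 : (k : ℝ) + a + (((n - k : ℕ) : ℝ) + c) = (a + c) + (n : ℕ) := by
    have : ((n - k : ℕ) : ℝ) = (n : ℝ) - k := by rw [Nat.cast_sub hk]
    rw [this]; push_cast; ring
  rw [h3, h1, h2, gamma_add_nat' a ha, gamma_add_nat' c hc, gamma_add_nat' (a + c) (by positivity)]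
  have hga := Real.Gamma_pos_of_pos ha
  have hgc := Real.Gamma_pos_of_pos hc
  have hgac := Real.Gamma_pos_of_pos (show (0:ℝ) < a + c by positivity)
  have hP : (0:ℝ) < ∏ j ∈ Finset.range n, (a + c + j) := by
    apply Finset.prod_pos; intro j _; positivity
  field_simp

/-- As `b' → ∞`, the conditional thinning distribution `BetaBinomial(x, εb', (1-ε)b')`
converges to `Binomial(x, ε)` (so negative binomial count splitting with `b' = ∞` recovers
Poisson count splitting), and the covariance
`Cov(X1, X − X1) = ε(1-ε)(μ²/b)(1 − (b+1)/(b'+1))` of the folds converges to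
`ε(1-ε)μ²/b`. -/
theorem nb_thinning_binomial_limit (μ b ε : ℝ) (hμ : 0 < μ) (hb : 0 < b)
    (hε : ε ∈ Set.Ioo (0 : ℝ) 1) :
    (∀ x k : ℕ,
      Tendsto (fun b' : ℝ => betaBinomPMF x (ε * b') ((1 - ε) * b') k) atTop
        (nhds (binomPMF x ε k))) ∧
    Tendsto (fun b' : ℝ => ε * (1 - ε) * (μ ^ 2 / b) * (1 - (b + 1) / (b' + 1))) atTop
      (nhds (ε * (1 - ε) * μ ^ 2 / b)) := by
  obtain ⟨hε0, hε1⟩ := hε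
  have hε1' : 0 < 1 - ε := by linarith
  constructor
  · intro x k
    by_cases hk : k ≤ x
    · -- main case
      have key : ∀ b' : ℝ, 0 < b' →
          betaBinomPMF x (ε * b') ((1 - ε) * b') k =
            (x.choose k : ℝ) *
              ((∏ j ∈ Finset.range k, (ε + j / b')) *
                ∏ j ∈ Finset.range (x - k), ((1 - ε) + j / b')) /
              ∏ j ∈ Finset.range x, (1 + j / b') := by
        intro b' hb'
        unfold betaBinomPMF
        rw [mul_div_assoc, beta_ratio (ε * b') ((1 - ε) * b') (by positivity) (by positivity) x k hk]
        have e1 : ∏ j ∈ Finset.range k, (ε * b' + j) =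
            b' ^ k * ∏ j ∈ Finset.range k, (ε + j / b') :=
          calc ∏ j ∈ Finset.range k, (ε * b' + j)
              = ∏ j ∈ Finset.range k, (b' * (ε + j / b')) :=
                Finset.prod_congr rfl fun j _ => by field_simp; try ring
            _ = b' ^ k * ∏ j ∈ Finset.range k, (ε + j / b') := by
                rw [Finset.prod_mul_distrib, Finset.prod_const, Finset.card_range]
        have e2 : ∏ j ∈ Finset.range (x - k), ((1 - ε) * b' + j) =
            b' ^ (x - k) * ∏ j ∈ Finset.range (x - k), ((1 - ε) + j / b') :=
          calc ∏ j ∈ Finset.range (x - k), ((1 - ε) * b' + j)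
              = ∏ j ∈ Finset.range (x - k), (b' * ((1 - ε) + j / b')) :=
                Finset.prod_congr rfl fun j _ => by field_simp; try ring
            _ = _ := by rw [Finset.prod_mul_distrib, Finset.prod_const, Finset.card_range]
        have e3 : ∏ j ∈ Finset.range x, (ε * b' + (1 - ε) * b' + j) =
            b' ^ x * ∏ j ∈ Finset.range x, (1 + j / b') :=
          calc ∏ j ∈ Finset.range x, (ε * b' + (1 - ε) * b' + j)
              = ∏ j ∈ Finset.range x, (b' * (1 + j / b')) :=
                Finset.prod_congr rfl fun j _ => by field_simp; try ring
            _ = _ := by rw [Finset.prod_mul_distrib, Finset.prod_const, Finset.card_range]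
        have hbk : b' ^ x = b' ^ k * b' ^ (x - k) := by
          rw [← pow_add, Nat.add_sub_cancel' hk]
        have hP3 : ∏ j ∈ Finset.range x, (1 + (j:ℝ) / b') ≠ 0 := by
          apply ne_of_gt; apply Finset.prod_pos; intro j _; positivity
        have hb'k : (b':ℝ) ^ k ≠ 0 := by positivity
        have hb'xk : (b':ℝ) ^ (x - k) ≠ 0 := by positivity
        rw [e1, e2, e3, hbk]
        field_simp
      have hlim : Tendsto (fun b' : ℝ =>
          (x.choose k : ℝ) *
            ((∏ j ∈ Finset.range k, (ε + j / b')) *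
              ∏ j ∈ Finset.range (x - k), ((1 - ε) + j / b')) /
            ∏ j ∈ Finset.range x, (1 + j / b')) atTop (nhds (binomPMF x ε k)) := by
        have hdiv : ∀ j : ℕ, Tendsto (fun b' : ℝ => (j : ℝ) / b') atTop (nhds 0) :=
          fun j => tendsto_const_nhds.div_atTop tendsto_id
        have p1 : Tendsto (fun b' : ℝ => ∏ j ∈ Finset.range k, (ε + j / b')) atTop
            (nhds (ε ^ k)) := by
          have := tendsto_finset_prod (Finset.range k)
            (fun j _ => (tendsto_const_nhds.add (hdiv j) : Tendsto (fun b' : ℝ => ε + j / b') atTop (nhds (ε + 0))))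
          simpa using this
        have p2 : Tendsto (fun b' : ℝ => ∏ j ∈ Finset.range (x - k), ((1 - ε) + j / b')) atTop
            (nhds ((1 - ε) ^ (x - k))) := by
          have := tendsto_finset_prod (Finset.range (x - k))
            (fun j _ => (tendsto_const_nhds.add (hdiv j) : Tendsto (fun b' : ℝ => (1 - ε) + j / b') atTop (nhds ((1 - ε) + 0))))
          simpa using this
        have p3 : Tendsto (fun b' : ℝ => ∏ j ∈ Finset.range x, (1 + j / b')) atTop
            (nhds 1) := by
          have := tendsto_finset_prod (Finset.range x)
            (fun j _ => (tendsto_const_nhds.add (hdiv j) : Tendsto (fun b' : ℝ => (1:ℝ) + j / b') atTop (nhds (1 + 0))))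
          simpa using this
        have := Tendsto.const_mul ((x.choose k : ℝ)) ((p1.mul p2).div p3 one_ne_zero)
        simpa [binomPMF, mul_assoc, mul_div_assoc] using this
      refine hlim.congr' ?_
      filter_upwards [eventually_gt_atTop (0:ℝ)] with b' hb'
      exact (key b' hb').symm
    · -- k > x : both sides are 0
      push_neg at hk
      have hc : x.choose k = 0 := Nat.choose_eq_zero_of_lt hk
      have h1 : ∀ b' : ℝ, betaBinomPMF x (ε * b') ((1 - ε) * b') k = 0 := by
        intro b'; unfold betaBinomPMF; rw [hc]; simp
      have h2 : binomPMF x ε k = 0 := by unfold binomPMF; rw [hc]; simp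
      simp only [h1, h2]
      exact tendsto_const_nhds
  · have h0 : Tendsto (fun b' : ℝ => (b + 1) / (b' + 1)) atTop (nhds 0) :=
      tendsto_const_nhds.div_atTop (tendsto_atTop_add_const_right _ _ tendsto_id)
    have hm := Tendsto.const_mul (ε * (1 - ε) * (μ ^ 2 / b)) (Tendsto.const_sub 1 h0)
    have h : ε * (1 - ε) * μ ^ 2 / b = ε * (1 - ε) * (μ ^ 2 / b) * (1 - 0) := by ring
    rw [h]
    exact hm
end
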